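/- Let q : ℝ → ℝ be continuous on [0,1], let α, β, γ ∈ ℝ with sin(β − γ) ≠ 0, and let λ ∈ ℝ. Suppose u, v : ℝ → ℝ are twice continuously differentiable, neither identically zero on [0,1], both satisfying −w'' + q w = λ w on [0,1], and u(0)cos α + u'(0)sin α = 0, u(1)cos β + u'(1)sin β = 0, v(0)cos α + v'(0)sin α = 0, v(1)cos γ + v'(1)sin γ = 0. Then a contradiction follows; i.e., the two Sturm–Liouville boundary value problems with boundary conditions (α,β) and (α,γ) have no common eigenvalue. -/

import Mathlib

/-!
The Wronskian `W = u v' - u' v` of two solutions of the same equation is constant. It vanishes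
at `0`, because both `(u 0, u' 0)` and `(v 0, v' 0)` are orthogonal to `(cos α, sin α) ≠ 0`.
Hence `(u 1, u' 1)` and `(v 1, v' 1)` are parallel, and both are nonzero by uniqueness for the
initial value problem at `1`. So `u` satisfies the `γ`-condition as well, and `(cos β, sin β)`,
`(cos γ, sin γ)` are both orthogonal to `(u 1, u' 1) ≠ 0`, forcing
`sin (β - γ) = sin β cos γ - cos β sin γ = 0`.
-/

open Set

lemma cross_eq_zero_of_orthogonal {a₁ a₂ b₁ b₂ n₁ n₂ : ℝ} (hn : n₁ ≠ 0 ∨ n₂ ≠ 0)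
    (ha : a₁ * n₁ + a₂ * n₂ = 0) (hb : b₁ * n₁ + b₂ * n₂ = 0) : a₁ * b₂ - a₂ * b₁ = 0 := by
  rcases hn with hn | hn
  · exact mul_left_cancel₀ hn (by linear_combination b₂ * ha - a₂ * hb)
  · exact mul_left_cancel₀ hn (by linear_combination a₁ * hb - b₁ * ha)

lemma orthogonal_of_cross_eq_zero {a₁ a₂ b₁ b₂ c₁ c₂ : ℝ} (hb : b₁ ≠ 0 ∨ b₂ ≠ 0)
    (hab : a₁ * b₂ - a₂ * b₁ = 0) (hbc : b₁ * c₁ + b₂ * c₂ = 0) : a₁ * c₁ + a₂ * c₂ = 0 := by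
  have := cross_eq_zero_of_orthogonal (a₁ := c₁) (a₂ := c₂) (b₁ := a₂) (b₂ := -a₁) hb
    (by linear_combination hbc) (by linear_combination -hab)
  linear_combination -this

lemma Real.cos_ne_zero_or_sin_ne_zero (θ : ℝ) : Real.cos θ ≠ 0 ∨ Real.sin θ ≠ 0 := by
  by_contra! h
  simpa [h.1, h.2] using Real.sin_sq_add_cos_sq θ

lemma lipschitzWith_snd_mul_fst {c : ℝ} {K : NNReal} (hc : ‖c‖ ≤ K) :
    LipschitzWith (max 1 K) (fun x : ℝ × ℝ => (x.2, c * x.1)) :=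
  (LipschitzWith.prod_snd.prodMk ((lipschitzWith_smul c).comp LipschitzWith.prod_fst)).weaken
    (max_le_max le_rfl (by simpa [← NNReal.coe_le_coe] using hc))

def wronskian (u u' v v' : ℝ → ℝ) (x : ℝ) : ℝ := u x * v' x - u' x * v x

section SecondOrderLinear

variable {p : ℝ → ℝ} {a b : ℝ}

theorem eqOn_zero_of_eq_zero_right {w w' w'' : ℝ → ℝ} (hp : ContinuousOn p (Icc a b))
    (hw : ∀ x ∈ Icc a b, HasDerivAt w (w' x) x ∧ HasDerivAt w' (w'' x) x)
    (heq : ∀ x ∈ Icc a b, w'' x = p x * w x) (hb : w b = 0) (hb' : w' b = 0) :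
    EqOn w 0 (Icc a b) := by
  obtain ⟨C, hC⟩ := isCompact_Icc.exists_bound_of_continuousOn hp
  -- `(w, w')` solves `X' = (X.2, p t * X.1)`, Lipschitz in `X` uniformly in `t` as `p` is bounded.
  have hlip : ∀ t ∈ Ioc a b, LipschitzOnWith (max 1 C.toNNReal)
      (fun x : ℝ × ℝ => (x.2, p t * x.1)) univ := fun t ht =>
    (lipschitzWith_snd_mul_fst
      ((hC t (Ioc_subset_Icc_self ht)).trans (Real.le_coe_toNNReal C))).lipschitzOnWith
  have hsol : EqOn (fun t => (w t, w' t)) (fun _ => 0) (Icc a b) := by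
    refine ODE_solution_unique_of_mem_Icc_left hlip
      (fun x hx => ((hw x hx).1.continuousAt.prodMk (hw x hx).2.continuousAt).continuousWithinAt)
      (fun t ht => ?_) (fun _ _ => mem_univ _) continuousOn_const
      (fun t _ => by simpa [Prod.mk_zero_zero] using hasDerivWithinAt_const t (Iic t) (0 : ℝ × ℝ))
      (fun _ _ => mem_univ _) (by simp [hb, hb'])
    have ht' := Ioc_subset_Icc_self ht
    simpa [← heq t ht'] using ((hw t ht').1.prodMk (hw t ht').2).hasDerivWithinAt
  exact fun x hx => congrArg Prod.fst (hsol hx)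

theorem ne_zero_or_ne_zero_right_of_exists_ne_zero {w w' w'' : ℝ → ℝ}
    (hp : ContinuousOn p (Icc a b))
    (hw : ∀ x ∈ Icc a b, HasDerivAt w (w' x) x ∧ HasDerivAt w' (w'' x) x)
    (heq : ∀ x ∈ Icc a b, w'' x = p x * w x) (hne : ∃ x ∈ Icc a b, w x ≠ 0) :
    w b ≠ 0 ∨ w' b ≠ 0 := by
  by_contra! hb
  obtain ⟨x, hx, hwx⟩ := hne
  exact hwx (eqOn_zero_of_eq_zero_right hp hw heq hb.1 hb.2 hx)

theorem wronskian_eq_left {u u' u'' v v' v'' : ℝ → ℝ}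
    (hu : ∀ x ∈ Icc a b, HasDerivAt u (u' x) x ∧ HasDerivAt u' (u'' x) x)
    (hv : ∀ x ∈ Icc a b, HasDerivAt v (v' x) x ∧ HasDerivAt v' (v'' x) x)
    (hueq : ∀ x ∈ Icc a b, u'' x = p x * u x) (hveq : ∀ x ∈ Icc a b, v'' x = p x * v x) :
    ∀ x ∈ Icc a b, wronskian u u' v v' x = wronskian u u' v v' a := by
  have hW : ∀ x ∈ Icc a b, HasDerivAt (wronskian u u' v v') 0 x := fun x hx => by
    refine (((hu x hx).1.mul (hv x hx).2).sub ((hu x hx).2.mul (hv x hx).1)).congr_deriv ?_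
    rw [hueq x hx, hveq x hx]
    ring
  exact constant_of_has_deriv_right_zero (fun x hx => (hW x hx).continuousAt.continuousWithinAt)
    fun x hx => (hW x (Ico_subset_Icc_self hx)).hasDerivWithinAt

end SecondOrderLinear

theorem no_common_eigenvalue_general
    (q : ℝ → ℝ) (hq : ContinuousOn q (Set.Icc (0:ℝ) 1))
    (α β γ : ℝ) (hβγ : Real.sin (β - γ) ≠ 0)
    (lam : ℝ)
    (u u' u'' v v' v'' : ℝ → ℝ)
    (hu : ∀ x ∈ Set.Icc (0:ℝ) 1, HasDerivAt u (u' x) x ∧ HasDerivAt u' (u'' x) x)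
    (hv : ∀ x ∈ Set.Icc (0:ℝ) 1, HasDerivAt v (v' x) x ∧ HasDerivAt v' (v'' x) x)
    (hune : ∃ x ∈ Set.Icc (0:ℝ) 1, u x ≠ 0)
    (hvne : ∃ x ∈ Set.Icc (0:ℝ) 1, v x ≠ 0)
    (hueq : ∀ x ∈ Set.Icc (0:ℝ) 1, -u'' x + q x * u x = lam * u x)
    (hveq : ∀ x ∈ Set.Icc (0:ℝ) 1, -v'' x + q x * v x = lam * v x)
    (hubc0 : u 0 * Real.cos α + u' 0 * Real.sin α = 0)
    (hubc1 : u 1 * Real.cos β + u' 1 * Real.sin β = 0)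
    (hvbc0 : v 0 * Real.cos α + v' 0 * Real.sin α = 0)
    (hvbc1 : v 1 * Real.cos γ + v' 1 * Real.sin γ = 0) :
    False := by
  have hp : ContinuousOn (fun x => q x - lam) (Icc 0 1) := hq.sub continuousOn_const
  have hueq' : ∀ x ∈ Icc (0:ℝ) 1, u'' x = (q x - lam) * u x := fun x hx => by
    linear_combination -hueq x hx
  have hveq' : ∀ x ∈ Icc (0:ℝ) 1, v'' x = (q x - lam) * v x := fun x hx => by
    linear_combination -hveq x hx
  have hu1 := ne_zero_or_ne_zero_right_of_exists_ne_zero hp hu hueq' hune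
  have hv1 := ne_zero_or_ne_zero_right_of_exists_ne_zero hp hv hveq' hvne
  have hW0 : wronskian u u' v v' 0 = 0 :=
    cross_eq_zero_of_orthogonal (Real.cos_ne_zero_or_sin_ne_zero α) hubc0 hvbc0
  have hW1 : wronskian u u' v v' 1 = 0 :=
    (wronskian_eq_left hu hv hueq' hveq' 1 (right_mem_Icc.mpr zero_le_one)).trans hW0
  have huγ : u 1 * Real.cos γ + u' 1 * Real.sin γ = 0 :=
    orthogonal_of_cross_eq_zero hv1 hW1 hvbc1
  have hβγ0 := cross_eq_zero_of_orthogonal (a₁ := Real.cos β) (a₂ := Real.sin β)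
    (b₁ := Real.cos γ) (b₂ := Real.sin γ) hu1 (by linear_combination hubc1)
    (by linear_combination huγ)
  exact hβγ (by rw [Real.sin_sub]; linear_combination -hβγ0)

/-- If `sin(β − γ) ≠ 0`, the Sturm–Liouville boundary value problems with boundary
conditions `(α,β)` and `(α,γ)` have no common eigenvalue: the existence of nontrivial
`C²` solutions `u` (with conditions `(α,β)`) and `v` (with conditions `(α,γ)`) of
`−w'' + q w = λ w` on `[0,1]` leads to a contradiction. -/
theorem no_common_eigenvalue
    (q : ℝ → ℝ) (hq : ContinuousOn q (Set.Icc (0:ℝ) 1))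
    (α β γ : ℝ) (hβγ : Real.sin (β - γ) ≠ 0)
    (lam : ℝ)
    (u u' u'' v v' v'' : ℝ → ℝ)
    (hu : ∀ x ∈ Set.Icc (0:ℝ) 1, HasDerivAt u (u' x) x ∧ HasDerivAt u' (u'' x) x)
    (hu'' : ContinuousOn u'' (Set.Icc (0:ℝ) 1))
    (hv : ∀ x ∈ Set.Icc (0:ℝ) 1, HasDerivAt v (v' x) x ∧ HasDerivAt v' (v'' x) x)
    (hv'' : ContinuousOn v'' (Set.Icc (0:ℝ) 1))
    (hune : ∃ x ∈ Set.Icc (0:ℝ) 1, u x ≠ 0)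
    (hvne : ∃ x ∈ Set.Icc (0:ℝ) 1, v x ≠ 0)
    (hueq : ∀ x ∈ Set.Icc (0:ℝ) 1, -u'' x + q x * u x = lam * u x)
    (hveq : ∀ x ∈ Set.Icc (0:ℝ) 1, -v'' x + q x * v x = lam * v x)
    (hubc0 : u 0 * Real.cos α + u' 0 * Real.sin α = 0)
    (hubc1 : u 1 * Real.cos β + u' 1 * Real.sin β = 0)
    (hvbc0 : v 0 * Real.cos α + v' 0 * Real.sin α = 0)
    (hvbc1 : v 1 * Real.cos γ + v' 1 * Real.sin γ = 0) :
    False :=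
  no_common_eigenvalue_general q hq α β γ hβγ lam u u' u'' v v' v'' hu hv hune hvne hueq hveq hubc0
    hubc1 hvbc0 hvbc1
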